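/- arXiv:1803.01665 — 6 statements merged into one kernel-verified Lean document; each statement's English description precedes it below -/
import Mathlib

section
/- For all real numbers a and b with a < b, the ratio Φ(a − θ)/Φ(b − θ) tends to 0 as θ → ∞. -/
open Filter

/-- The standard normal cumulative distribution function
`Φ(x) = ∫_{−∞}^x (2π)^{−1/2} exp(−t²/2) dt`. -/
noncomputable def stdNormalCDF (x : ℝ) : ℝ :=
  ∫ t in Set.Iic x, (Real.sqrt (2 * Real.pi))⁻¹ * Real.exp (-(t ^ 2) / 2)

/-!
Shifting the standard Gaussian density by `d` multiplies it by the likelihood ratio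
`exp (d t - d² / 2)`, which is increasing in `t` when `d ≥ 0`. Integrating over `(-∞, x]` gives
`Φ(x - d) ≤ exp (d x - d² / 2) Φ(x)`; with `x = b - θ` and `d = b - a` the right-hand factor
tends to `0` as `θ → ∞`.
-/

open MeasureTheory ProbabilityTheory Real Set

lemma stdNormalCDF_eq_setIntegral_gaussianPDFReal (x : ℝ) :
    stdNormalCDF x = ∫ t in Iic x, gaussianPDFReal 0 1 t := by
  simp [stdNormalCDF, gaussianPDFReal]

lemma stdNormalCDF_pos (x : ℝ) : 0 < stdNormalCDF x := by
  rw [stdNormalCDF_eq_setIntegral_gaussianPDFReal, setIntegral_pos_iff_support_of_nonneg_ae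
    (.of_forall (gaussianPDFReal_nonneg 0 1)) (integrable_gaussianPDFReal 0 1).integrableOn,
    Function.support_eq_univ fun t => (gaussianPDFReal_pos 0 1 t one_ne_zero).ne', univ_inter]
  simp

lemma gaussianPDFReal_zero_one_sub (t d : ℝ) :
    gaussianPDFReal 0 1 (t - d) = exp (d * t - d ^ 2 / 2) * gaussianPDFReal 0 1 t := by
  simp only [gaussianPDFReal, mul_left_comm (exp _), ← exp_add]
  congr 2
  push_cast
  ring

lemma setIntegral_Iic_comp_sub_right (f : ℝ → ℝ) (x d : ℝ) :
    ∫ t in Iic x, f (t - d) = ∫ t in Iic (x - d), f t := by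
  have h := (measurePreserving_sub_right volume d).setIntegral_preimage_emb
    (measurableEmbedding_subRight d) f (Iic (x - d))
  rwa [show (· - d) ⁻¹' Iic (x - d) = Iic x by ext; simp] at h

lemma stdNormalCDF_sub_le (x : ℝ) {d : ℝ} (hd : 0 ≤ d) :
    stdNormalCDF (x - d) ≤ exp (d * x - d ^ 2 / 2) * stdNormalCDF x := by
  simp only [stdNormalCDF_eq_setIntegral_gaussianPDFReal, ← setIntegral_Iic_comp_sub_right,
    ← integral_const_mul]
  refine setIntegral_mono_on ((integrable_gaussianPDFReal 0 1).comp_sub_right d).integrableOn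
    ((integrable_gaussianPDFReal 0 1).const_mul _).integrableOn measurableSet_Iic fun t ht => ?_
  rw [gaussianPDFReal_zero_one_sub]
  gcongr
  · exact gaussianPDFReal_nonneg 0 1 t
  · exact ht

/-- For all real `a < b`, the ratio `Φ(a − θ)/Φ(b − θ)` tends to `0` as `θ → ∞`. -/
theorem stmt_0 (a b : ℝ) (hab : a < b) :
    Tendsto (fun θ : ℝ => stdNormalCDF (a - θ) / stdNormalCDF (b - θ)) atTop (nhds 0) := by
  have hbound : ∀ θ, stdNormalCDF (a - θ) / stdNormalCDF (b - θ) ≤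
      exp ((b - a) * (b - θ) - (b - a) ^ 2 / 2) := fun θ => by
    rw [div_le_iff₀ (stdNormalCDF_pos _)]
    simpa using stdNormalCDF_sub_le (b - θ) (sub_nonneg.2 hab.le)
  have hexp : Tendsto (fun θ : ℝ => exp ((b - a) * (b - θ) - (b - a) ^ 2 / 2)) atTop (nhds 0) :=
    tendsto_exp_atBot.comp <| tendsto_atBot_add_const_right _ _ <|
      (tendsto_atBot_add_const_left _ b tendsto_neg_atTop_atBot).const_mul_atBot (sub_pos.2 hab)
  exact squeeze_zero (fun θ => div_nonneg (stdNormalCDF_pos _).le (stdNormalCDF_pos _).le)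
    hbound hexp
end

section
/- For each fixed w ∈ T, the map θ ↦ F^T_{θ,ς²}(w) is continuous and strictly decreasing on ℝ. -/
/-!
Write `F(θ) = α(θ) / (α(θ) + β(θ))`, where `α` and `β` are the `N(θ, ς²)`-masses of the parts
of `T` left and right of `w`; both have positive Lebesgue measure since `T` is open around `w`.
For `θ₁ < θ₂` the density ratio `φ_{θ₂} / φ_{θ₁}` is an increasing exponential in `x`, so with
`r` its value at `w` we get `α(θ₂) ≤ r α(θ₁)` and `r β(θ₁) < β(θ₂)`, which forces
`F(θ₂) < F(θ₁)`. Continuity is dominated convergence: a Gaussian density whose mean moves in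
a bounded set is dominated by a multiple of the density with doubled variance.
-/

open Filter MeasureTheory ProbabilityTheory Set

/-- The cdf of the normal distribution with mean `θ` and variance `ς²`, truncated to the
set `T`: `F^T_{θ,ς²}(w) = P(V ≤ w ∧ V ∈ T) / P(V ∈ T)` for `V ~ N(θ, ς²)`. -/
noncomputable def truncNormalCDF (ς : ℝ) (T : Set ℝ) (θ w : ℝ) : ℝ :=
  ((gaussianReal θ (Real.toNNReal (ς ^ 2))) (Set.Iic w ∩ T)).toReal /
    ((gaussianReal θ (Real.toNNReal (ς ^ 2))) T).toReal

open scoped NNReal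

lemma setIntegral_pos_of_forall_pos {X : Type*} [MeasurableSpace X] {μ : Measure X}
    {f : X → ℝ} {s : Set X} (hs : MeasurableSet s) (hfi : IntegrableOn f s μ)
    (hf : ∀ x ∈ s, 0 < f x) (hμs : 0 < μ s) : 0 < ∫ x in s, f x ∂μ := by
  rw [setIntegral_pos_iff_support_of_nonneg_ae
    ((ae_restrict_iff' hs).mpr (ae_of_all _ fun x hx => (hf x hx).le)) hfi]
  exact hμs.trans_le (measure_mono fun x hx => ⟨(hf x hx).ne', hx⟩)

lemma isOpen_setOf_ereal_lt_lt (a b : EReal) : IsOpen {x : ℝ | a < x ∧ x < b} :=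
  (isOpen_Ioi.inter isOpen_Iio).preimage continuous_coe_real_ereal

lemma IsOpen.volume_Iic_inter_pos {U : Set ℝ} (hU : IsOpen U) {w : ℝ} (hw : w ∈ U) :
    0 < volume (Iic w ∩ U) := by
  obtain ⟨ε, hε, hball⟩ := Metric.isOpen_iff.mp hU w hw
  rw [Real.ball_eq_Ioo] at hball
  refine lt_of_lt_of_le ?_ (measure_mono (s := Ioo (w - ε) w) fun x hx =>
    ⟨hx.2.le, hball ⟨hx.1, by linarith [hx.2]⟩⟩)
  simpa using hε

lemma IsOpen.volume_Ioi_inter_pos {U : Set ℝ} (hU : IsOpen U) {w : ℝ} (hw : w ∈ U) :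
    0 < volume (Ioi w ∩ U) := by
  obtain ⟨ε, hε, hball⟩ := Metric.isOpen_iff.mp hU w hw
  rw [Real.ball_eq_Ioo] at hball
  refine lt_of_lt_of_le ?_ (measure_mono (s := Ioo w (w + ε)) fun x hx =>
    ⟨hx.1, hball ⟨by linarith [hx.1], hx.2⟩⟩)
  simpa using hε

lemma div_add_lt_div_add {α₁ β₁ α₂ β₂ c : ℝ} (hα₁ : 0 < α₁) (hβ₁ : 0 ≤ β₁) (hα₂ : 0 ≤ α₂)
    (hα : α₂ ≤ c * α₁) (hβ : c * β₁ < β₂) : α₂ / (α₂ + β₂) < α₁ / (α₁ + β₁) := by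
  have hc : 0 ≤ c := nonneg_of_mul_nonneg_left (hα₂.trans hα) hα₁
  have hβ₂ : 0 < β₂ := (mul_nonneg hc hβ₁).trans_lt hβ
  rw [div_lt_div_iff₀ (by positivity) (by positivity)]
  nlinarith [mul_le_mul_of_nonneg_right hα hβ₁, mul_lt_mul_of_pos_left hβ hα₁]

namespace ProbabilityTheory

variable {v : ℝ≥0}

lemma toReal_gaussianReal_eq_setIntegral (hv : v ≠ 0) (θ : ℝ) (s : Set ℝ) :
    (gaussianReal θ v s).toReal = ∫ x in s, gaussianPDFReal θ v x := by
  rw [gaussianReal_apply_eq_integral θ hv s,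
    ENNReal.toReal_ofReal (integral_nonneg fun x => gaussianPDFReal_nonneg _ _ _)]

lemma setIntegral_gaussianPDFReal_pos (hv : v ≠ 0) (θ : ℝ) {s : Set ℝ} (hs : MeasurableSet s)
    (hs0 : 0 < volume s) : 0 < ∫ x in s, gaussianPDFReal θ v x :=
  setIntegral_pos_of_forall_pos hs (integrable_gaussianPDFReal θ v).integrableOn
    (fun _ _ => gaussianPDFReal_pos _ _ _ hv) hs0

lemma gaussianPDFReal_le_mul_gaussianPDFReal_two_mul (hv : v ≠ 0) (θ θ₀ x : ℝ) :
    gaussianPDFReal θ v x ≤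
      √2 * Real.exp ((θ - θ₀) ^ 2 / (2 * v)) * gaussianPDFReal θ₀ (2 * v) x := by
  have hv₀ : (0 : ℝ) < v := by positivity
  have hnorm : (√(2 * Real.pi * v))⁻¹ = √2 * (√(2 * Real.pi * (2 * v)))⁻¹ := by
    rw [show 2 * Real.pi * (2 * (v : ℝ)) = 2 * (2 * Real.pi * v) by ring,
      Real.sqrt_mul zero_le_two, mul_inv, ← mul_assoc, mul_inv_cancel₀ (by positivity), one_mul]
  have hexp : -(x - θ) ^ 2 / (2 * v) ≤ (θ - θ₀) ^ 2 / (2 * v) + -(x - θ₀) ^ 2 / (2 * (2 * v)) := by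
    have hgap : (θ - θ₀) ^ 2 / (2 * v) + -(x - θ₀) ^ 2 / (2 * (2 * v)) - -(x - θ) ^ 2 / (2 * v)
        = (x - 2 * θ + θ₀) ^ 2 / (4 * v) := by
      field_simp
      ring
    linarith [div_nonneg (sq_nonneg (x - 2 * θ + θ₀)) (by positivity : (0 : ℝ) ≤ 4 * v)]
  simp only [gaussianPDFReal, NNReal.coe_mul, NNReal.coe_ofNat, hnorm]
  calc √2 * (√(2 * Real.pi * (2 * v)))⁻¹ * Real.exp (-(x - θ) ^ 2 / (2 * v))
      ≤ √2 * (√(2 * Real.pi * (2 * v)))⁻¹ *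
          Real.exp ((θ - θ₀) ^ 2 / (2 * v) + -(x - θ₀) ^ 2 / (2 * (2 * v))) := by
        gcongr
    _ = _ := by rw [Real.exp_add]; ring

lemma continuous_setIntegral_gaussianPDFReal (hv : v ≠ 0) (s : Set ℝ) :
    Continuous fun θ => ∫ x in s, gaussianPDFReal θ v x := by
  refine continuous_iff_continuousAt.mpr fun θ₀ => continuousAt_of_dominated
    (bound := fun x => √2 * Real.exp (1 / (2 * v)) * gaussianPDFReal θ₀ (2 * v) x)
    (Eventually.of_forall fun θ => (measurable_gaussianPDFReal θ v).aestronglyMeasurable)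
    ?_ ((integrable_gaussianPDFReal θ₀ (2 * v)).const_mul _).integrableOn
    (ae_of_all _ fun x => ?_)
  · filter_upwards [Metric.closedBall_mem_nhds θ₀ one_pos] with θ hθ
    refine ae_of_all _ fun x => ?_
    rw [Real.norm_of_nonneg (gaussianPDFReal_nonneg _ _ _)]
    have hθ₁ : (θ - θ₀) ^ 2 ≤ 1 := by
      rw [Metric.mem_closedBall, Real.dist_eq] at hθ
      nlinarith [abs_nonneg (θ - θ₀), sq_abs (θ - θ₀)]
    refine (gaussianPDFReal_le_mul_gaussianPDFReal_two_mul hv θ θ₀ x).trans ?_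
    gcongr
    exact gaussianPDFReal_nonneg _ _ _
  · simp only [gaussianPDFReal]
    fun_prop

lemma gaussianPDFReal_eq_exp_mul (hv : v ≠ 0) (θ₁ θ₂ x : ℝ) :
    gaussianPDFReal θ₂ v x =
      Real.exp ((θ₂ - θ₁) * (2 * x - θ₁ - θ₂) / (2 * v)) * gaussianPDFReal θ₁ v x := by
  have hv₀ : (0 : ℝ) < v := by positivity
  simp only [gaussianPDFReal]
  rw [mul_left_comm, ← Real.exp_add]
  congr 2
  field_simp
  ring

section LikelihoodRatio

variable {θ₁ θ₂ w : ℝ} {s : Set ℝ}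

lemma setIntegral_gaussianPDFReal_le_exp_mul (hv : v ≠ 0) (h : θ₁ ≤ θ₂) (hs : MeasurableSet s)
    (hsw : s ⊆ Iic w) :
    ∫ x in s, gaussianPDFReal θ₂ v x ≤
      Real.exp ((θ₂ - θ₁) * (2 * w - θ₁ - θ₂) / (2 * v)) * ∫ x in s, gaussianPDFReal θ₁ v x := by
  rw [← integral_const_mul]
  refine setIntegral_mono_on (integrable_gaussianPDFReal θ₂ v).integrableOn
    ((integrable_gaussianPDFReal θ₁ v).const_mul _).integrableOn hs fun x hx => ?_
  rw [gaussianPDFReal_eq_exp_mul hv θ₁]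
  gcongr
  · exact gaussianPDFReal_nonneg _ _ _
  · exact hsw hx

lemma exp_mul_setIntegral_gaussianPDFReal_lt (hv : v ≠ 0) (h : θ₁ < θ₂) (hs : MeasurableSet s)
    (hsw : s ⊆ Ioi w) (hs0 : 0 < volume s) :
    Real.exp ((θ₂ - θ₁) * (2 * w - θ₁ - θ₂) / (2 * v)) * ∫ x in s, gaussianPDFReal θ₁ v x <
      ∫ x in s, gaussianPDFReal θ₂ v x := by
  have hint₁ := ((integrable_gaussianPDFReal θ₁ v).const_mul
    (Real.exp ((θ₂ - θ₁) * (2 * w - θ₁ - θ₂) / (2 * v)))).integrableOn (s := s)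
  have hint₂ := (integrable_gaussianPDFReal θ₂ v).integrableOn (s := s)
  rw [← integral_const_mul, ← sub_pos, ← integral_sub hint₂ hint₁]
  refine setIntegral_pos_of_forall_pos hs (hint₂.sub hint₁) (fun x hx => ?_) hs0
  rw [gaussianPDFReal_eq_exp_mul hv θ₁, ← sub_mul]
  refine mul_pos (sub_pos.mpr ?_) (gaussianPDFReal_pos _ _ _ hv)
  gcongr
  exact hsw hx

end LikelihoodRatio

end ProbabilityTheory

section TruncatedNormal

variable {ς : ℝ} {T : Set ℝ}

lemma toNNReal_sq_ne_zero (hς : ς ≠ 0) : Real.toNNReal (ς ^ 2) ≠ 0 :=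
  (Real.toNNReal_pos.mpr (by positivity)).ne'

lemma truncNormalCDF_eq_div_setIntegral (hς : ς ≠ 0) (θ w : ℝ) :
    truncNormalCDF ς T θ w =
      (∫ x in Iic w ∩ T, gaussianPDFReal θ (ς ^ 2).toNNReal x) /
        ∫ x in T, gaussianPDFReal θ (ς ^ 2).toNNReal x := by
  rw [truncNormalCDF, toReal_gaussianReal_eq_setIntegral (toNNReal_sq_ne_zero hς),
    toReal_gaussianReal_eq_setIntegral (toNNReal_sq_ne_zero hς)]

lemma continuous_truncNormalCDF (hς : ς ≠ 0) (hT : MeasurableSet T) (hT₀ : 0 < volume T)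
    (w : ℝ) : Continuous fun θ => truncNormalCDF ς T θ w := by
  simp only [truncNormalCDF_eq_div_setIntegral hς]
  exact (continuous_setIntegral_gaussianPDFReal (toNNReal_sq_ne_zero hς) _).div
    (continuous_setIntegral_gaussianPDFReal (toNNReal_sq_ne_zero hς) _)
    fun θ => (setIntegral_gaussianPDFReal_pos (toNNReal_sq_ne_zero hς) θ hT hT₀).ne'

lemma strictAnti_truncNormalCDF (hς : ς ≠ 0) (hT : MeasurableSet T) {w : ℝ}
    (hlow : 0 < volume (Iic w ∩ T)) (hhigh : 0 < volume (Ioi w ∩ T)) :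
    StrictAnti fun θ => truncNormalCDF ς T θ w := by
  have hv := toNNReal_sq_ne_zero hς
  have hdisj : Disjoint (Iic w ∩ T) (Ioi w ∩ T) :=
    disjoint_left.mpr fun x hx₁ hx₂ => (not_lt.mpr (mem_Iic.mp hx₁.1)) (mem_Ioi.mp hx₂.1)
  have hsplit (θ : ℝ) (v : ℝ≥0) : ∫ x in T, gaussianPDFReal θ v x =
      (∫ x in Iic w ∩ T, gaussianPDFReal θ v x) + ∫ x in Ioi w ∩ T, gaussianPDFReal θ v x := by
    rw [← setIntegral_union hdisj (measurableSet_Ioi.inter hT)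
      (integrable_gaussianPDFReal θ v).integrableOn (integrable_gaussianPDFReal θ v).integrableOn,
      ← union_inter_distrib_right, Iic_union_Ioi, univ_inter]
  intro θ₁ θ₂ h
  simp only [truncNormalCDF_eq_div_setIntegral hς, hsplit]
  exact div_add_lt_div_add
    (setIntegral_gaussianPDFReal_pos hv θ₁ (measurableSet_Iic.inter hT) hlow)
    (setIntegral_nonneg (measurableSet_Ioi.inter hT) fun x _ => gaussianPDFReal_nonneg _ _ _)
    (setIntegral_nonneg (measurableSet_Iic.inter hT) fun x _ => gaussianPDFReal_nonneg _ _ _)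
    (setIntegral_gaussianPDFReal_le_exp_mul hv h.le (measurableSet_Iic.inter hT)
      inter_subset_left)
    (exp_mul_setIntegral_gaussianPDFReal_lt hv h (measurableSet_Ioi.inter hT)
      inter_subset_left hhigh)

end TruncatedNormal

theorem stmt_1_general (ς : ℝ) (hς : 0 < ς) (K : ℕ) (a b : ℕ → EReal)
    (T : Set ℝ)
    (hT : T = ⋃ i ∈ Finset.range K, {x : ℝ | a i < (x : EReal) ∧ (x : EReal) < b i})
    (w : ℝ) (hw : w ∈ T) :
    Continuous (fun θ : ℝ => truncNormalCDF ς T θ w) ∧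
      StrictAnti (fun θ : ℝ => truncNormalCDF ς T θ w) := by
  have hT_open : IsOpen T := hT ▸ isOpen_biUnion fun i _ => isOpen_setOf_ereal_lt_lt (a i) (b i)
  have hlow := hT_open.volume_Iic_inter_pos hw
  exact ⟨continuous_truncNormalCDF hς.ne' hT_open.measurableSet
      (hlow.trans_le (measure_mono inter_subset_right)) w,
    strictAnti_truncNormalCDF hς.ne' hT_open.measurableSet hlow
      (hT_open.volume_Ioi_inter_pos hw)⟩

/-- For each fixed `w ∈ T`, the map `θ ↦ F^T_{θ,ς²}(w)` is continuous and strictly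
decreasing on `ℝ`.  Here `T = ⋃_{i<K} (a i, b i)` is a nonempty union of finitely many
open intervals with (possibly infinite) ordered endpoints. -/
theorem stmt_1 (ς : ℝ) (hς : 0 < ς) (K : ℕ) (hK : 1 ≤ K) (a b : ℕ → EReal)
    (hab : ∀ i < K, a i < b i) (hba : ∀ i, i + 1 < K → b i < a (i + 1))
    (T : Set ℝ)
    (hT : T = ⋃ i ∈ Finset.range K, {x : ℝ | a i < (x : EReal) ∧ (x : EReal) < b i})
    (w : ℝ) (hw : w ∈ T) :
    Continuous (fun θ : ℝ => truncNormalCDF ς T θ w) ∧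
      StrictAnti (fun θ : ℝ => truncNormalCDF ς T θ w) :=
  stmt_1_general ς hς K a b T hT w hw
end

section
/- For each fixed w ∈ T, F^T_{θ,ς²}(w) → 1 as θ → −∞ and F^T_{θ,ς²}(w) → 0 as θ → ∞. -/
/-! The density of `N(θ, v)` is `exp (θ x / v - θ² / (2 v))` times that of `N(0, v)`.
For `θ ≥ 0` this factor increases in `x`, so if `A ⊆ (-∞, s]` and `B ⊇ (m, t)` with `s < m`,
then `P_θ(A) / P_θ(B) ≤ exp (θ (s - m) / v) · P_0(A) / P_0((m, t)) → 0` as `θ → ∞`; the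
reflection `x ↦ -x` gives the mirror statement as `θ → -∞`. Since `T` is open, `w` has an
interval neighbourhood in `T`, and these two estimates apply to `P(V ≤ w, V ∈ T) / P(V ∈ T)` and
to `P(V > w, V ∈ T) / P(V ∈ T) = 1 - F^T_{θ,ς²}(w)`. -/

open Filter MeasureTheory ProbabilityTheory Set

open scoped NNReal Topology

namespace ProbabilityTheory

variable {v : ℝ≥0}

lemma gaussianPDFReal_eq_exp_mul_gaussianPDFReal_zero (hv : v ≠ 0) (θ x : ℝ) :
    gaussianPDFReal θ v x = Real.exp (θ * x / v - θ ^ 2 / (2 * v)) * gaussianPDFReal 0 v x := by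
  have hv' : (v : ℝ) ≠ 0 := NNReal.coe_ne_zero.mpr hv
  simp only [gaussianPDFReal, sub_zero]
  rw [mul_left_comm, ← Real.exp_add]
  congr 2
  field_simp
  ring

lemma measureReal_gaussianReal_le_of_subset_Iic (hv : v ≠ 0) {θ s : ℝ} (hθ : 0 ≤ θ)
    {A : Set ℝ} (hA : A ⊆ Iic s) :
    (gaussianReal θ v).real A
      ≤ Real.exp (θ * s / v - θ ^ 2 / (2 * v)) * (gaussianReal 0 v).real A := by
  rw [measureReal_def, measureReal_def, ← ENNReal.toReal_ofReal (Real.exp_pos _).le,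
    ← ENNReal.toReal_mul]
  refine ENNReal.toReal_mono (by finiteness) ?_
  rw [gaussianReal_apply θ hv, gaussianReal_apply 0 hv,
    ← lintegral_const_mul _ (measurable_gaussianPDF 0 v)]
  refine setLIntegral_mono (by fun_prop) fun x hx => ?_
  rw [gaussianPDF, gaussianPDF, gaussianPDFReal_eq_exp_mul_gaussianPDFReal_zero hv θ x,
    ENNReal.ofReal_mul (Real.exp_nonneg _)]
  refine mul_le_mul_left (ENNReal.ofReal_le_ofReal (Real.exp_le_exp.mpr ?_)) _
  gcongr
  exact hA hx

lemma exp_mul_measureReal_gaussianReal_le_of_subset_Ici (hv : v ≠ 0) {θ t : ℝ} (hθ : 0 ≤ θ)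
    {B : Set ℝ} (hB : B ⊆ Ici t) :
    Real.exp (θ * t / v - θ ^ 2 / (2 * v)) * (gaussianReal 0 v).real B
      ≤ (gaussianReal θ v).real B := by
  rw [measureReal_def, measureReal_def, ← ENNReal.toReal_ofReal (Real.exp_pos _).le,
    ← ENNReal.toReal_mul]
  refine ENNReal.toReal_mono (by finiteness) ?_
  rw [gaussianReal_apply θ hv, gaussianReal_apply 0 hv,
    ← lintegral_const_mul _ (measurable_gaussianPDF 0 v)]
  refine setLIntegral_mono (by fun_prop) fun x hx => ?_
  rw [gaussianPDF, gaussianPDF, gaussianPDFReal_eq_exp_mul_gaussianPDFReal_zero hv θ x,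
    ENNReal.ofReal_mul (Real.exp_nonneg _)]
  refine mul_le_mul_left (ENNReal.ofReal_le_ofReal (Real.exp_le_exp.mpr ?_)) _
  gcongr
  exact hB hx

lemma measureReal_gaussianReal_Ioo_pos (hv : v ≠ 0) (θ : ℝ) {c d : ℝ} (hcd : c < d) :
    0 < (gaussianReal θ v).real (Ioo c d) := by
  refine ENNReal.toReal_pos (fun h => ?_) (measure_ne_top _ _)
  exact (not_le.mpr hcd) (by simpa using gaussianReal_absolutelyContinuous' θ hv h)

lemma gaussianReal_apply_neg (θ : ℝ) (A : Set ℝ) :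
    gaussianReal θ v (-A) = gaussianReal (-θ) v A := by
  rw [← gaussianReal_map_neg]
  exact ((MeasurableEquiv.neg ℝ).map_apply A).symm

lemma tendsto_measureReal_gaussianReal_div_atTop (hv : v ≠ 0) {A B : Set ℝ} {s t : ℝ}
    (hst : s < t) (hA : A ⊆ Iic s) (hB : Ioo s t ⊆ B) :
    Tendsto (fun θ => (gaussianReal θ v).real A / (gaussianReal θ v).real B) atTop (𝓝 0) := by
  have hv' : (0 : ℝ) < v := by positivity
  obtain ⟨m, hsm, hmt⟩ := exists_between hst
  set C := (gaussianReal 0 v).real A / (gaussianReal 0 v).real (Ioo m t)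
  have hbound : ∀ θ ≥ 0, (gaussianReal θ v).real A / (gaussianReal θ v).real B
      ≤ Real.exp (θ * ((s - m) / v)) * C := by
    intro θ hθ
    have hm0 := measureReal_gaussianReal_Ioo_pos hv 0 hmt
    have hmθ := measureReal_gaussianReal_Ioo_pos hv θ hmt
    calc (gaussianReal θ v).real A / (gaussianReal θ v).real B
        ≤ (gaussianReal θ v).real A / (gaussianReal θ v).real (Ioo m t) :=
          div_le_div_of_nonneg_left measureReal_nonneg hmθ
            (measureReal_mono ((Ioo_subset_Ioo_left hsm.le).trans hB))
      _ ≤ (Real.exp (θ * s / v - θ ^ 2 / (2 * v)) * (gaussianReal 0 v).real A)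
          / (Real.exp (θ * m / v - θ ^ 2 / (2 * v)) * (gaussianReal 0 v).real (Ioo m t)) :=
          div_le_div₀ (by positivity) (measureReal_gaussianReal_le_of_subset_Iic hv hθ hA)
            (by positivity)
            (exp_mul_measureReal_gaussianReal_le_of_subset_Ici hv hθ fun x hx => hx.1.le)
      _ = Real.exp (θ * ((s - m) / v)) * C := by
          rw [mul_div_mul_comm, ← Real.exp_sub]
          congr 2
          ring
  have hlim : Tendsto (fun θ => Real.exp (θ * ((s - m) / v)) * C) atTop (𝓝 0) := by
    simpa using (Real.tendsto_exp_atBot.comp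
      (tendsto_id.atTop_mul_const_of_neg (div_neg_of_neg_of_pos (sub_neg.mpr hsm) hv'))).mul_const C
  exact squeeze_zero' (Eventually.of_forall fun θ => by positivity)
    ((eventually_ge_atTop 0).mono hbound) hlim

lemma tendsto_measureReal_gaussianReal_div_atBot (hv : v ≠ 0) {A B : Set ℝ} {s t : ℝ}
    (hts : t < s) (hA : A ⊆ Ici s) (hB : Ioo t s ⊆ B) :
    Tendsto (fun θ => (gaussianReal θ v).real A / (gaussianReal θ v).real B) atBot (𝓝 0) := by
  have h := tendsto_measureReal_gaussianReal_div_atTop hv (neg_lt_neg hts) (A := -A) (B := -B)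
    (by simpa using neg_subset_neg.mpr hA) (by simpa using neg_subset_neg.mpr hB)
  refine (h.comp tendsto_neg_atBot_atTop).congr fun θ => ?_
  simp only [Function.comp, measureReal_def, gaussianReal_apply_neg, neg_neg]

end ProbabilityTheory

theorem stmt_2_general
    (ς : ℝ) (hς : 0 < ς) (K : ℕ) (a b : ℕ → EReal)
    (T : Set ℝ)
    (hT : T = ⋃ i ∈ Finset.range K, {x : ℝ | a i < (x : EReal) ∧ (x : EReal) < b i})
    (w : ℝ) (hw : w ∈ T) :
    Tendsto (fun θ : ℝ => truncNormalCDF ς T θ w) atBot (nhds 1) ∧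
      Tendsto (fun θ : ℝ => truncNormalCDF ς T θ w) atTop (nhds 0) := by
  have hv : Real.toNNReal (ς ^ 2) ≠ 0 := by positivity
  have hT_open : IsOpen T :=
    hT ▸ isOpen_biUnion fun i _ => isOpen_Ioo.preimage continuous_coe_real_ereal
  obtain ⟨l, u, ⟨hlw, hwu⟩, hlu⟩ := mem_nhds_iff_exists_Ioo_subset.mp (hT_open.mem_nhds hw)
  have hT_pos (θ : ℝ) : (gaussianReal θ (Real.toNNReal (ς ^ 2))).real T ≠ 0 :=
    ((measureReal_gaussianReal_Ioo_pos hv θ (hlw.trans hwu)).trans_le (measureReal_mono hlu)).ne'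
  refine ⟨?_, tendsto_measureReal_gaussianReal_div_atTop hv hwu inter_subset_left
    ((Ioo_subset_Ioo_left hlw.le).trans hlu)⟩
  have h := tendsto_measureReal_gaussianReal_div_atBot hv hlw (A := T \ Iic w)
    (fun x hx => mem_Ici.mpr (not_le.mp hx.2).le) ((Ioo_subset_Ioo_right hwu.le).trans hlu)
  refine (sub_zero (1 : ℝ) ▸ tendsto_const_nhds.sub h).congr fun θ => ?_
  rw [sub_eq_iff_eq_add, ← div_self (hT_pos θ), truncNormalCDF, ← measureReal_def,
    ← measureReal_def, ← add_div, inter_comm, measureReal_inter_add_sdiff measurableSet_Iic]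

/-- For each fixed `w ∈ T`, `F^T_{θ,ς²}(w) → 1` as `θ → −∞` and `F^T_{θ,ς²}(w) → 0`
as `θ → ∞`. -/
theorem stmt_2
    (ς : ℝ) (hς : 0 < ς) (K : ℕ) (hK : 1 ≤ K) (a b : ℕ → EReal)
    (hab : ∀ i < K, a i < b i) (hba : ∀ i, i + 1 < K → b i < a (i + 1))
    (T : Set ℝ)
    (hT : T = ⋃ i ∈ Finset.range K, {x : ℝ | a i < (x : EReal) ∧ (x : EReal) < b i})
    (w : ℝ) (hw : w ∈ T) :
    Tendsto (fun θ : ℝ => truncNormalCDF ς T θ w) atBot (nhds 1) ∧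
      Tendsto (fun θ : ℝ => truncNormalCDF ς T θ w) atTop (nhds 0) :=
  stmt_2_general ς hς K a b T hT w hw
end

section
/- For every w ∈ T and every γ ∈ (0,1), there exists a unique θ ∈ ℝ such that F^T_{θ,ς²}(w) = γ; this unique solution is denoted Q_γ(w). -/
open Filter MeasureTheory ProbabilityTheory Set

open Topology Real
open scoped NNReal

/-!
With `t = θ / ς²`, the density of `N(θ, ς²)` is a constant multiple of `e^{t (x - w)}` times
the density of `N(0, ς²)`, so `F^T_{θ,ς²}(w) = A t / (A t + B t)` where `A` and `B` integrate
`e^{t (x - w)}` against `N(0, ς²)` over `T ∩ (-∞, w]` and `T ∩ (w, ∞)`. Since `T` is open at `w`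
both are positive; `A` is antitone and `B` strictly increasing, so the ratio is strictly
decreasing. By dominated convergence `B → 0` as `t → -∞` and `A → 0` as `t → ∞` (the point `w`
carries no mass), so the ratio runs continuously from `1` down to `0` and takes each value in
`(0, 1)` exactly once.
-/

lemma StrictAnti.existsUnique_eq_of_tendsto {f : ℝ → ℝ} (hanti : StrictAnti f)
    (hf : Continuous f) {a b γ : ℝ} (hbot : Tendsto f atBot (𝓝 a))
    (htop : Tendsto f atTop (𝓝 b)) (hγ : γ ∈ Ioo b a) : ∃! t, f t = γ := by
  obtain ⟨t₁, ht₁⟩ := (htop.eventually (eventually_lt_nhds hγ.1)).exists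
  obtain ⟨t₂, ht₂⟩ := (hbot.eventually (eventually_gt_nhds hγ.2)).exists
  obtain ⟨t, ht⟩ := mem_range_of_exists_le_of_exists_ge hf ⟨t₁, ht₁.le⟩ ⟨t₂, ht₂.le⟩
  exact ⟨t, ht, fun s hs => hanti.injective (hs.trans ht.symm)⟩

lemma MeasureTheory.integral_lt_integral_of_ae_lt {α : Type*} {m : MeasurableSpace α}
    {μ : Measure α} {f g : α → ℝ} (hμ : μ ≠ 0) (hf : Integrable f μ) (hg : Integrable g μ)
    (h : ∀ᵐ x ∂μ, f x < g x) : ∫ x, f x ∂μ < ∫ x, g x ∂μ := by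
  rw [← sub_pos, ← integral_sub hg hf,
    integral_pos_iff_support_of_nonneg_ae (h.mono fun x hx => (sub_pos.2 hx).le) (hg.sub hf)]
  have hsupp : ∀ᵐ x ∂μ, x ∈ Function.support (g - f) := h.mono fun x hx => (sub_pos.2 hx).ne'
  have : (ae μ).NeBot := ae_neBot.2 hμ
  refine pos_iff_ne_zero.2 fun h0 => ?_
  obtain ⟨x, hx, hx'⟩ := (hsupp.and (measure_eq_zero_iff_ae_notMem.1 h0)).exists
  exact hx' hx

section OpenPos

variable {μ : Measure ℝ} [μ.IsOpenPosMeasure] {T : Set ℝ} {w : ℝ}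

lemma measure_Iic_inter_ne_zero (hT : IsOpen T) (hw : w ∈ T) : μ (Iic w ∩ T) ≠ 0 := by
  obtain ⟨x, hxT, hxw⟩ := (((hT.eventually_mem hw).filter_mono nhdsWithin_le_nhds).and
    (eventually_mem_nhdsWithin (s := Iio w))).exists
  exact mt (measure_mono_null (inter_subset_inter_left _ Iio_subset_Iic_self))
    ((isOpen_Iio.inter hT).measure_ne_zero μ ⟨x, hxw, hxT⟩)

lemma measure_Ioi_inter_ne_zero (hT : IsOpen T) (hw : w ∈ T) : μ (Ioi w ∩ T) ≠ 0 := by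
  obtain ⟨x, hxT, hxw⟩ := (((hT.eventually_mem hw).filter_mono nhdsWithin_le_nhds).and
    (eventually_mem_nhdsWithin (s := Ioi w))).exists
  exact (isOpen_Ioi.inter hT).measure_ne_zero μ ⟨x, hxw, hxT⟩

end OpenPos

namespace ProbabilityTheory

section Mgf

variable {Ω : Type*} {m : MeasurableSpace Ω} {μ : Measure Ω} {X : Ω → ℝ}

lemma strictMono_mgf_of_ae_pos (hμ : μ ≠ 0) (hX : ∀ᵐ ω ∂μ, 0 < X ω)
    (h : ∀ t, Integrable (fun ω => exp (t * X ω)) μ) : StrictMono (mgf X μ) :=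
  fun _ _ ht => integral_lt_integral_of_ae_lt hμ (h _) (h _)
    (hX.mono fun _ hω => exp_lt_exp.2 (mul_lt_mul_of_pos_right ht hω))

lemma antitone_mgf_of_ae_nonpos (hX : ∀ᵐ ω ∂μ, X ω ≤ 0)
    (h : ∀ t, Integrable (fun ω => exp (t * X ω)) μ) : Antitone (mgf X μ) :=
  fun _ _ ht => integral_mono_ae (h _) (h _)
    (hX.mono fun _ hω => exp_le_exp.2 (mul_le_mul_of_nonpos_right ht hω))

lemma tendsto_mgf_atBot_of_ae_pos [IsFiniteMeasure μ] (hXm : AEMeasurable X μ)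
    (hX : ∀ᵐ ω ∂μ, 0 < X ω) : Tendsto (mgf X μ) atBot (𝓝 0) := by
  have hbound : ∀ᶠ t in atBot, ∀ᵐ ω ∂μ, ‖exp (t * X ω)‖ ≤ 1 := by
    filter_upwards [eventually_le_atBot 0] with t ht
    filter_upwards [hX] with ω hω
    rw [norm_of_nonneg (exp_pos _).le, exp_le_one_iff]
    exact mul_nonpos_of_nonpos_of_nonneg ht hω.le
  have hlim : ∀ᵐ ω ∂μ, Tendsto (fun t => exp (t * X ω)) atBot (𝓝 0) := hX.mono fun ω hω =>
    tendsto_exp_atBot.comp (tendsto_id.atBot_mul_const hω)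
  have h := tendsto_integral_filter_of_dominated_convergence _
    (Eventually.of_forall fun t => ((hXm.const_mul t).exp).aestronglyMeasurable)
    hbound (integrable_const 1) hlim
  rwa [integral_zero] at h

lemma tendsto_mgf_atTop_of_ae_neg [IsFiniteMeasure μ] (hXm : AEMeasurable X μ)
    (hX : ∀ᵐ ω ∂μ, X ω < 0) : Tendsto (mgf X μ) atTop (𝓝 0) := by
  have h := (tendsto_mgf_atBot_of_ae_pos hXm.neg (hX.mono fun _ => neg_pos.2)).comp
    tendsto_neg_atTop_atBot
  simpa [Function.comp_def, mgf_neg] using h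

end Mgf

section TiltedCDF

variable {ν : Measure ℝ} {w : ℝ}

/-- The cdf at `w` of `ν` tilted by `x ↦ exp (t * x)`. Centring the exponent at `w` does not
change the ratio, but makes the two halves of the denominator monotone in `t`. -/
noncomputable def tiltedCDF (ν : Measure ℝ) (w t : ℝ) : ℝ :=
  mgf (· - w) (ν.restrict (Iic w)) t / mgf (· - w) ν t

lemma tiltedCDF_eq_div_add (hexp : ∀ t, Integrable (fun x => exp (t * (x - w))) ν) (t : ℝ) :
    tiltedCDF ν w t = mgf (· - w) (ν.restrict (Iic w)) t /
      (mgf (· - w) (ν.restrict (Iic w)) t + mgf (· - w) (ν.restrict (Ioi w)) t) := by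
  rw [tiltedCDF, ← compl_Iic, mgf, mgf, mgf, integral_add_compl measurableSet_Iic (hexp t)]

lemma antitone_mgf_restrict_Iic (hexp : ∀ t, Integrable (fun x => exp (t * (x - w))) ν) :
    Antitone (mgf (· - w) (ν.restrict (Iic w))) :=
  antitone_mgf_of_ae_nonpos
    (ae_restrict_of_forall_mem measurableSet_Iic fun _ hx => sub_nonpos.2 hx)
    fun t => (hexp t).restrict

lemma mgf_restrict_Iic_pos (hexp : ∀ t, Integrable (fun x => exp (t * (x - w))) ν)
    (hle : ν (Iic w) ≠ 0) (t : ℝ) : 0 < mgf (· - w) (ν.restrict (Iic w)) t :=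
  mgf_pos' (by rwa [Ne, Measure.restrict_eq_zero]) (hexp t).restrict

lemma strictMono_mgf_restrict_Ioi (hexp : ∀ t, Integrable (fun x => exp (t * (x - w))) ν)
    (hgt : ν (Ioi w) ≠ 0) : StrictMono (mgf (· - w) (ν.restrict (Ioi w))) :=
  strictMono_mgf_of_ae_pos (by rwa [Ne, Measure.restrict_eq_zero])
    (ae_restrict_of_forall_mem measurableSet_Ioi fun _ hx => sub_pos.2 hx)
    fun t => (hexp t).restrict

lemma continuous_tiltedCDF (hexp : ∀ t, Integrable (fun x => exp (t * (x - w))) ν)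
    (hle : ν (Iic w) ≠ 0) : Continuous (tiltedCDF ν w) := by
  have hν : ν ≠ 0 := fun h => hle (by simp [h])
  exact (continuous_mgf fun t => (hexp t).restrict).div (continuous_mgf hexp)
    fun t => (mgf_pos' hν (hexp t)).ne'

lemma strictAnti_tiltedCDF (hexp : ∀ t, Integrable (fun x => exp (t * (x - w))) ν)
    (hle : ν (Iic w) ≠ 0) (hgt : ν (Ioi w) ≠ 0) : StrictAnti (tiltedCDF ν w) := by
  intro t₁ t₂ ht
  have hA₁ := mgf_restrict_Iic_pos hexp hle t₁
  have hA₂ := mgf_restrict_Iic_pos hexp hle t₂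
  have hA := antitone_mgf_restrict_Iic hexp ht.le
  have hB := strictMono_mgf_restrict_Ioi hexp hgt ht
  have hB₁ : 0 ≤ mgf (· - w) (ν.restrict (Ioi w)) t₁ := mgf_nonneg
  rw [tiltedCDF_eq_div_add hexp, tiltedCDF_eq_div_add hexp,
    div_lt_div_iff₀ (add_pos_of_pos_of_nonneg hA₂ mgf_nonneg)
      (add_pos_of_pos_of_nonneg hA₁ mgf_nonneg)]
  nlinarith

lemma tendsto_tiltedCDF_atBot [IsFiniteMeasure ν]
    (hexp : ∀ t, Integrable (fun x => exp (t * (x - w))) ν) (hle : ν (Iic w) ≠ 0) :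
    Tendsto (tiltedCDF ν w) atBot (𝓝 1) := by
  set A := mgf (· - w) (ν.restrict (Iic w))
  set B := mgf (· - w) (ν.restrict (Ioi w))
  have hB : Tendsto B atBot (𝓝 0) := tendsto_mgf_atBot_of_ae_pos (by fun_prop)
    (ae_restrict_of_forall_mem measurableSet_Ioi fun _ hx => sub_pos.2 hx)
  have hrest : Tendsto (fun t => B t / (A t + B t)) atBot (𝓝 0) := by
    refine squeeze_zero' (Eventually.of_forall fun t => div_nonneg mgf_nonneg
      (add_nonneg mgf_nonneg mgf_nonneg)) ?_ (by simpa using hB.div_const (A 0))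
    filter_upwards [eventually_le_atBot 0] with t ht
    exact div_le_div_of_nonneg_left mgf_nonneg (mgf_restrict_Iic_pos hexp hle 0)
      (le_add_of_le_of_nonneg (antitone_mgf_restrict_Iic hexp ht) mgf_nonneg)
  have hsum : tiltedCDF ν w = fun t => 1 - B t / (A t + B t) := funext fun t => by
    rw [tiltedCDF_eq_div_add hexp, eq_sub_iff_add_eq, ← add_div,
      div_self (add_pos_of_pos_of_nonneg (mgf_restrict_Iic_pos hexp hle t) mgf_nonneg).ne']
  simpa [hsum] using hrest.const_sub 1

lemma tendsto_tiltedCDF_atTop [IsFiniteMeasure ν]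
    (hexp : ∀ t, Integrable (fun x => exp (t * (x - w))) ν) (hw : ν {w} = 0)
    (hgt : ν (Ioi w) ≠ 0) : Tendsto (tiltedCDF ν w) atTop (𝓝 0) := by
  set A := mgf (· - w) (ν.restrict (Iic w))
  set B := mgf (· - w) (ν.restrict (Ioi w))
  have hA : Tendsto A atTop (𝓝 0) := by
    refine tendsto_mgf_atTop_of_ae_neg (by fun_prop) ?_
    filter_upwards [ae_restrict_mem measurableSet_Iic,
      ae_restrict_of_ae (measure_eq_zero_iff_ae_notMem.1 hw)] with x hxw hx
    exact sub_neg.2 (lt_of_le_of_ne hxw hx)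
  have hB₀ : 0 < B 0 := mgf_pos' (by rwa [Ne, Measure.restrict_eq_zero]) (hexp 0).restrict
  refine squeeze_zero' (Eventually.of_forall fun t => ?_) ?_ (by simpa using hA.div_const (B 0))
  · rw [tiltedCDF_eq_div_add hexp]
    exact div_nonneg mgf_nonneg (add_nonneg mgf_nonneg mgf_nonneg)
  filter_upwards [eventually_ge_atTop 0] with t ht
  rw [tiltedCDF_eq_div_add hexp]
  exact div_le_div_of_nonneg_left mgf_nonneg hB₀
    (le_add_of_nonneg_of_le mgf_nonneg (strictMono_mgf_restrict_Ioi hexp hgt |>.monotone ht))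

theorem existsUnique_tiltedCDF_eq [IsFiniteMeasure ν]
    (hexp : ∀ t, Integrable (fun x => exp (t * (x - w))) ν) (hw : ν {w} = 0)
    (hle : ν (Iic w) ≠ 0) (hgt : ν (Ioi w) ≠ 0) {γ : ℝ} (hγ : γ ∈ Ioo 0 1) :
    ∃! t, tiltedCDF ν w t = γ :=
  (strictAnti_tiltedCDF hexp hle hgt).existsUnique_eq_of_tendsto
    (continuous_tiltedCDF hexp hle) (tendsto_tiltedCDF_atBot hexp hle)
    (tendsto_tiltedCDF_atTop hexp hw hgt) hγ

end TiltedCDF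

section Gaussian

variable {v : ℝ≥0}

lemma integrable_exp_mul_sub_gaussianReal (μ t w : ℝ) :
    Integrable (fun x => exp (t * (x - w))) (gaussianReal μ v) := by
  simp_rw [mul_sub, sub_eq_add_neg, exp_add]
  exact (integrable_exp_mul_gaussianReal t).mul_const _

lemma isOpenPosMeasure_gaussianReal (μ : ℝ) (hv : v ≠ 0) :
    (gaussianReal μ v).IsOpenPosMeasure :=
  (gaussianReal_absolutelyContinuous' μ hv).isOpenPosMeasure

lemma toReal_gaussianReal_eq_mul_mgf (hv : v ≠ 0) (θ w : ℝ) (S : Set ℝ) :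
    (gaussianReal θ v S).toReal =
      exp (θ * w / v - θ ^ 2 / (2 * v)) * mgf (· - w) ((gaussianReal 0 v).restrict S) (θ / v) := by
  rw [gaussianReal_apply_eq_integral _ hv, ENNReal.toReal_ofReal
    (setIntegral_nonneg_of_ae (ae_of_all _ (gaussianPDFReal_nonneg _ _))), mgf,
    gaussianReal_of_var_ne_zero _ hv, setIntegral_withDensity_eq_setIntegral_toReal_smul' S
      (measurable_gaussianPDF _ _) (ae_of_all _ fun _ => gaussianPDF_lt_top),
    ← integral_const_mul]
  refine integral_congr_ae (ae_of_all _ fun x => ?_)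
  simp only [toReal_gaussianPDF, gaussianPDFReal_def, smul_eq_mul]
  rw [mul_left_comm, mul_assoc, ← exp_add, mul_assoc, ← exp_add]
  congr 2
  have : (v : ℝ) ≠ 0 := NNReal.coe_ne_zero.2 hv
  field_simp
  ring

lemma truncNormalCDF_eq_tiltedCDF {ς : ℝ} (hς : ς ≠ 0) (T : Set ℝ) (θ w : ℝ) :
    truncNormalCDF ς T θ w =
      tiltedCDF ((gaussianReal 0 (ς ^ 2).toNNReal).restrict T) w (θ / ς ^ 2) := by
  have hv : (ς ^ 2).toNNReal ≠ 0 := (Real.toNNReal_pos.2 (by positivity)).ne'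
  have hvς : ((ς ^ 2).toNNReal : ℝ) = ς ^ 2 := Real.coe_toNNReal _ (sq_nonneg ς)
  rw [truncNormalCDF, toReal_gaussianReal_eq_mul_mgf hv θ w,
    toReal_gaussianReal_eq_mul_mgf hv θ w, mul_div_mul_left _ _ (exp_pos _).ne', hvς, tiltedCDF,
    Measure.restrict_restrict measurableSet_Iic]

end Gaussian

end ProbabilityTheory

theorem stmt_3_general
    (ς : ℝ) (hς : 0 < ς) (K : ℕ) (a b : ℕ → EReal)
    (T : Set ℝ)
    (hT : T = ⋃ i ∈ Finset.range K, {x : ℝ | a i < (x : EReal) ∧ (x : EReal) < b i})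
    (w : ℝ) (hw : w ∈ T) (γ : ℝ) (hγ : γ ∈ Set.Ioo (0 : ℝ) 1) :
    ∃! θ : ℝ, truncNormalCDF ς T θ w = γ := by
  have hTo : IsOpen T := by
    rw [hT]
    exact isOpen_biUnion fun i _ => (isOpen_Ioo (a := a i) (b := b i)).preimage
      continuous_coe_real_ereal
  have hv : (ς ^ 2).toNNReal ≠ 0 := (Real.toNNReal_pos.2 (by positivity)).ne'
  have := isOpenPosMeasure_gaussianReal 0 hv
  have := nullSingletonClass_gaussianReal (μ := 0) hv
  simp_rw [truncNormalCDF_eq_tiltedCDF hς.ne']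
  obtain ⟨t, ht, huniq⟩ := existsUnique_tiltedCDF_eq 
    (ν := (gaussianReal 0 (ς ^ 2).toNNReal).restrict T)
    (fun t => (integrable_exp_mul_sub_gaussianReal 0 t w).restrict)
    (nonpos_iff_eq_zero.1 ((Measure.restrict_le_self _).trans_eq (measure_singleton w)))
    (by rw [Measure.restrict_apply measurableSet_Iic]; exact measure_Iic_inter_ne_zero hTo hw)
    (by rw [Measure.restrict_apply measurableSet_Ioi]; exact measure_Ioi_inter_ne_zero hTo hw) hγ
  refine ⟨t * ς ^ 2, by beta_reduce; rwa [mul_div_cancel_right₀ _ (by positivity)], fun θ hθ => ?_⟩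
  rw [← huniq _ hθ, div_mul_cancel₀ _ (by positivity)]

/-- For every `w ∈ T` and every `γ ∈ (0,1)`, there exists a unique `θ ∈ ℝ` with
`F^T_{θ,ς²}(w) = γ` (this unique solution is denoted `Q_γ(w)`). -/
theorem stmt_3
    (ς : ℝ) (hς : 0 < ς) (K : ℕ) (hK : 1 ≤ K) (a b : ℕ → EReal)
    (hab : ∀ i < K, a i < b i) (hba : ∀ i, i + 1 < K → b i < a (i + 1))
    (T : Set ℝ)
    (hT : T = ⋃ i ∈ Finset.range K, {x : ℝ | a i < (x : EReal) ∧ (x : EReal) < b i})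
    (w : ℝ) (hw : w ∈ T) (γ : ℝ) (hγ : γ ∈ Set.Ioo (0 : ℝ) 1) :
    ∃! θ : ℝ, truncNormalCDF ς T θ w = γ :=
  stmt_3_general ς hς K a b T hT w hw γ hγ
end

section
/- For each fixed w ∈ T, the map γ ↦ Q_γ(w) is strictly decreasing on (0,1). -/
open Filter MeasureTheory ProbabilityTheory Set

/-! The Gaussian location family has a monotone likelihood ratio,
`φ_{θ₂}(x) φ_{θ₁}(y) ≤ φ_{θ₁}(x) φ_{θ₂}(y)` for `θ₁ ≤ θ₂` and `x ≤ y`. Integrating over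
`x ∈ (-∞, w] ∩ T` and `y ∈ (w, ∞) ∩ T` shows that `θ ↦ F^T_{θ,ς²}(w)` is antitone, and a
right inverse `γ ↦ Q_γ(w)` of an antitone map is strictly antitone. -/

lemma Antitone.strictAntiOn_of_leftInvOn {α β : Type*} [Preorder α] [LinearOrder β]
    {F : β → α} {Q : α → β} {s : Set α} (hF : Antitone F) (hFQ : LeftInvOn F Q s) :
    StrictAntiOn Q s := by
  intro γ₁ hγ₁ γ₂ hγ₂ hlt
  by_contra! hle
  have := hF hle
  rw [hFQ hγ₁, hFQ hγ₂] at this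
  exact (this.trans_lt hlt).false

namespace ProbabilityTheory

open Real in
lemma gaussianPDFReal_mul_le_mul_swap (v : NNReal) {θ₁ θ₂ x y : ℝ} (hθ : θ₁ ≤ θ₂)
    (hxy : x ≤ y) :
    gaussianPDFReal θ₂ v x * gaussianPDFReal θ₁ v y
      ≤ gaussianPDFReal θ₁ v x * gaussianPDFReal θ₂ v y := by
  simp only [gaussianPDFReal]
  have hexp : rexp (-(x - θ₂) ^ 2 / (2 * v)) * rexp (-(y - θ₁) ^ 2 / (2 * v))
      ≤ rexp (-(x - θ₁) ^ 2 / (2 * v)) * rexp (-(y - θ₂) ^ 2 / (2 * v)) := by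
    rw [← exp_add, ← exp_add, exp_le_exp, ← add_div, ← add_div]
    refine div_le_div_of_nonneg_right ?_ (by positivity)
    nlinarith [mul_nonneg (sub_nonneg.mpr hxy) (sub_nonneg.mpr hθ)]
  have hc : 0 ≤ (√(2 * π * v))⁻¹ * (√(2 * π * v))⁻¹ := by positivity
  nlinarith [mul_le_mul_of_nonneg_left hexp hc]

lemma setIntegral_gaussianPDFReal_mul_le_mul_swap (v : NNReal) {θ₁ θ₂ : ℝ} (hθ : θ₁ ≤ θ₂)
    {A C : Set ℝ} (hA : MeasurableSet A) (hC : MeasurableSet C)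
    (hAC : ∀ x ∈ A, ∀ y ∈ C, x ≤ y) :
    (∫ x in A, gaussianPDFReal θ₂ v x) * (∫ y in C, gaussianPDFReal θ₁ v y)
      ≤ (∫ x in A, gaussianPDFReal θ₁ v x) * (∫ y in C, gaussianPDFReal θ₂ v y) := by
  set f₁ := gaussianPDFReal θ₁ v
  set f₂ := gaussianPDFReal θ₂ v
  have hf₁ : Integrable f₁ := integrable_gaussianPDFReal θ₁ v
  have hf₂ : Integrable f₂ := integrable_gaussianPDFReal θ₂ v
  have hpointwise : ∀ x ∈ A, f₂ x * ∫ y in C, f₁ y ≤ f₁ x * ∫ y in C, f₂ y := by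
    intro x hx
    rw [← integral_const_mul, ← integral_const_mul]
    exact setIntegral_mono_on (hf₁.integrableOn.const_mul _) (hf₂.integrableOn.const_mul _) hC
      fun y hy => gaussianPDFReal_mul_le_mul_swap v hθ (hAC x hx y hy)
  rw [← integral_mul_const, ← integral_mul_const]
  exact setIntegral_mono_on (hf₂.integrableOn.mul_const _) (hf₁.integrableOn.mul_const _) hA
    hpointwise

lemma gaussianReal_real_apply (μ : ℝ) {v : NNReal} (hv : v ≠ 0) (s : Set ℝ) :
    (gaussianReal μ v).real s = ∫ x in s, gaussianPDFReal μ v x := by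
  rw [measureReal_def, gaussianReal_apply_eq_integral μ hv,
    ENNReal.toReal_ofReal (setIntegral_nonneg_of_ae (ae_of_all _ (gaussianPDFReal_nonneg μ v)))]

lemma gaussianReal_real_mul_le_mul_swap {v : NNReal} (hv : v ≠ 0) {θ₁ θ₂ : ℝ} (hθ : θ₁ ≤ θ₂)
    {A C : Set ℝ} (hA : MeasurableSet A) (hC : MeasurableSet C)
    (hAC : ∀ x ∈ A, ∀ y ∈ C, x ≤ y) :
    (gaussianReal θ₂ v).real A * (gaussianReal θ₁ v).real C
      ≤ (gaussianReal θ₁ v).real A * (gaussianReal θ₂ v).real C := by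
  simp only [gaussianReal_real_apply _ hv]
  exact setIntegral_gaussianPDFReal_mul_le_mul_swap v hθ hA hC hAC

end ProbabilityTheory

lemma truncNormalCDF_antitone {ς : ℝ} (hς : ς ≠ 0) {T : Set ℝ} (hT : MeasurableSet T) (w : ℝ) :
    Antitone fun θ => truncNormalCDF ς T θ w := by
  intro θ₁ θ₂ hθ
  simp only [truncNormalCDF, ← measureReal_def]
  set v := Real.toNNReal (ς ^ 2)
  have hv : v ≠ 0 := by simp [v, hς]
  by_cases hT0 : volume T = 0
  -- Gaussian laws have the null sets of Lebesgue measure, so both cdfs are the junk `x / 0 = 0`.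
  · have hnull : ∀ θ, (gaussianReal θ v).real T = 0 := fun θ => by
      simp [measureReal_def, gaussianReal_absolutelyContinuous θ hv hT0]
    simp [hnull]
  have hpos : ∀ θ, 0 < (gaussianReal θ v).real T := fun θ =>
    ENNReal.toReal_pos (mt (@gaussianReal_absolutelyContinuous' θ v hv T) hT0) (measure_ne_top _ _)
  have hsplit : ∀ θ, (gaussianReal θ v).real T
      = (gaussianReal θ v).real (Iic w ∩ T) + (gaussianReal θ v).real (Ioi w ∩ T) := fun θ => by
    rw [← measureReal_union ((Iic_disjoint_Ioi le_rfl).mono inter_subset_left inter_subset_left)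
      (measurableSet_Ioi.inter hT), ← union_inter_distrib_right, Iic_union_Ioi, univ_inter]
  have hcross := gaussianReal_real_mul_le_mul_swap hv hθ (measurableSet_Iic.inter hT)
    (measurableSet_Ioi.inter hT) fun x (hx : x ∈ Iic w ∩ T) y hy => hx.1.trans (le_of_lt hy.1)
  rw [div_le_div_iff₀ (hpos θ₂) (hpos θ₁), hsplit, hsplit]
  linarith

theorem stmt_4_general
    (ς : ℝ) (hς : 0 < ς) (K : ℕ) (a b : ℕ → EReal)
    (T : Set ℝ)
    (hT : T = ⋃ i ∈ Finset.range K, {x : ℝ | a i < (x : EReal) ∧ (x : EReal) < b i})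
    (w : ℝ) (Q : ℝ → ℝ)
    (hQ : ∀ γ ∈ Set.Ioo (0 : ℝ) 1, truncNormalCDF ς T (Q γ) w = γ) :
    StrictAntiOn Q (Set.Ioo (0 : ℝ) 1) := by
  have hTmeas : MeasurableSet T := hT ▸
    Finset.measurableSet_biUnion _ fun i _ => measurable_coe_real_ereal measurableSet_Ioo
  exact (truncNormalCDF_antitone hς.ne' hTmeas w).strictAntiOn_of_leftInvOn hQ

/-- For each fixed `w ∈ T`, the map `γ ↦ Q_γ(w)` is strictly decreasing on `(0,1)`.
Here `Q : ℝ → ℝ` is any function such that `Q γ` is the (unique) solution `θ` of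
`F^T_{θ,ς²}(w) = γ` for every `γ ∈ (0,1)`. -/
theorem stmt_4
    (ς : ℝ) (hς : 0 < ς) (K : ℕ) (hK : 1 ≤ K) (a b : ℕ → EReal)
    (hab : ∀ i < K, a i < b i) (hba : ∀ i, i + 1 < K → b i < a (i + 1))
    (T : Set ℝ)
    (hT : T = ⋃ i ∈ Finset.range K, {x : ℝ | a i < (x : EReal) ∧ (x : EReal) < b i})
    (w : ℝ) (hw : w ∈ T) (Q : ℝ → ℝ)
    (hQ : ∀ γ ∈ Set.Ioo (0 : ℝ) 1, truncNormalCDF ς T (Q γ) w = γ) :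
    StrictAntiOn Q (Set.Ioo (0 : ℝ) 1) :=
  stmt_4_general ς hς K a b T hT w Q hQ
end

section
/- If a_1 > −∞, then for each γ ∈ (0,1), (a_1 − w)·Q_γ(w) → −ς² log(1 − γ) as w decreases to a_1 along T. -/
/-!
Write `A = a₀`, `θ = Q w`, `r = (A - θ) / ς²` and `h = w - A`, and fix `B > A` with `(A, B] ⊆ T`.
On `[A, ∞)` the `N(θ, ς²)` density is `φ(A) e^{-r (x - A)}` times the factor
`e^{-(x - A)² / 2ς²} ∈ (0, 1]`, which is close to `1` near `A`. First, `r → ∞`: for bounded `r`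
the density on `(A, w]` is at most a constant times the density on `(w, B]`, so the truncated
cdf at `w` would be `O(h)`, not `γ`. Once `r` is large, the masses of `(A, w]` and of `T` are,
up to factors tending to `1`, the exponential masses `φ(A) (1 - e^{-r h}) / r` and `φ(A) / r`.
The equation `F(w) = γ` then forces `e^{-r h} → 1 - γ`, i.e. `r h → -log (1 - γ)`, and
`(A - w) θ = ς² r h - h A`.
-/

open Filter MeasureTheory ProbabilityTheory Set

open Real
open scoped NNReal Topology

lemma integral_Ioi_exp_neg_mul_sub {r : ℝ} (hr : 0 < r) (A : ℝ) :
    ∫ x in Ioi A, exp (-(r * (x - A))) = r⁻¹ := by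
  have h : ∀ x, exp (-(r * (x - A))) = exp (r * A) * exp (-r * x) := fun x => by
    rw [← exp_add]; ring_nf
  rw [integral_congr_ae (ae_of_all _ fun x => h x), integral_const_mul,
    integral_exp_mul_Ioi (neg_neg_of_pos hr), neg_div_neg_eq, mul_div_assoc', ← exp_add]
  simp [div_eq_inv_mul]

lemma integrableOn_Ioi_exp_neg_mul_sub {r : ℝ} (hr : 0 < r) (A : ℝ) :
    IntegrableOn (fun x => exp (-(r * (x - A)))) (Ioi A) :=
  .of_integral_ne_zero (by rw [integral_Ioi_exp_neg_mul_sub hr]; positivity)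

lemma integral_Ioc_exp_neg_mul_sub {r : ℝ} (hr : 0 < r) {A w : ℝ} (hw : A ≤ w) :
    ∫ x in Ioc A w, exp (-(r * (x - A))) = (1 - exp (-(r * (w - A)))) / r := by
  have hu : Ioi A = Ioc A w ∪ Ioi w := (Ioc_union_Ioi_eq_Ioi hw).symm
  have hI := integrableOn_Ioi_exp_neg_mul_sub hr A
  have hw' : ∫ x in Ioi w, exp (-(r * (x - A))) = exp (-(r * (w - A))) * r⁻¹ := by
    rw [← integral_Ioi_exp_neg_mul_sub hr w, ← integral_const_mul]
    congr 1 with x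
    rw [← exp_add]; ring_nf
  have := setIntegral_union (Ioc_disjoint_Ioi le_rfl) measurableSet_Ioi
    (hI.mono_set Ioc_subset_Ioi_self) (hI.mono_set (Ioi_subset_Ioi hw))
  rw [← hu, integral_Ioi_exp_neg_mul_sub hr, hw'] at this
  rw [div_eq_mul_inv, sub_mul, one_mul]
  linarith

lemma mul_setIntegral_Ioc_le_of_le_mul {f : ℝ → ℝ} {a b c C : ℝ} (hab : a ≤ b)
    (hbc : b ≤ c) (hfi : IntegrableOn f (Ioc a c))
    (hf : ∀ x ∈ Ioc a b, ∀ y ∈ Ioc b c, f x ≤ C * f y) :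
    (c - b) * ∫ x in Ioc a b, f x ≤ C * (b - a) * ∫ y in Ioc b c, f y := by
  have hfi_ab := hfi.mono_set (Ioc_subset_Ioc_right hbc)
  have hfi_bc := hfi.mono_set (Ioc_subset_Ioc_left hab)
  have hpoint : ∀ y ∈ Ioc b c, ∫ x in Ioc a b, f x ≤ C * (b - a) * f y := fun y hy => by
    calc ∫ x in Ioc a b, f x ≤ ∫ _ in Ioc a b, C * f y :=
          setIntegral_mono_on hfi_ab (integrableOn_const (by simp)) measurableSet_Ioc
            fun x hx => hf x hx y hy
      _ = C * (b - a) * f y := by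
          rw [setIntegral_const, Real.volume_real_Ioc_of_le hab, smul_eq_mul]; ring
  calc (c - b) * ∫ x in Ioc a b, f x = ∫ _ in Ioc b c, ∫ x in Ioc a b, f x := by
        rw [setIntegral_const, Real.volume_real_Ioc_of_le hbc, smul_eq_mul]
    _ ≤ ∫ y in Ioc b c, C * (b - a) * f y :=
        setIntegral_mono_on (integrableOn_const (by simp)) (hfi_bc.const_mul _)
          measurableSet_Ioc hpoint
    _ = C * (b - a) * ∫ y in Ioc b c, f y := integral_const_mul _ _

lemma gaussianPDFReal_eq_mul_exp (θ : ℝ) (v : ℝ≥0) (A x : ℝ) :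
    gaussianPDFReal θ v x = gaussianPDFReal θ v A * exp (-((A - θ) / v * (x - A))) *
      exp (-((x - A) ^ 2 / (2 * v))) := by
  rcases eq_or_ne v 0 with rfl | hv
  · simp
  simp only [gaussianPDFReal, mul_assoc, ← exp_add]
  congr 2
  have : (v : ℝ) ≠ 0 := by exact_mod_cast hv
  field_simp
  ring

section Tilting

variable {θ A x w : ℝ} {v : ℝ≥0}

lemma gaussianPDFReal_le_mul_exp :
    gaussianPDFReal θ v x ≤ gaussianPDFReal θ v A * exp (-((A - θ) / v * (x - A))) := by
  rw [gaussianPDFReal_eq_mul_exp θ v A x]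
  refine mul_le_of_le_one_right (by positivity [gaussianPDFReal_nonneg θ v A]) ?_
  exact exp_le_one_iff.2 (neg_nonpos.2 (by positivity))

lemma mul_exp_le_gaussianPDFReal {m : ℝ} (hx : A ≤ x) (hxm : x ≤ A + m) :
    gaussianPDFReal θ v A * exp (-(m ^ 2 / (2 * v))) * exp (-((A - θ) / v * (x - A))) ≤
      gaussianPDFReal θ v x := by
  rw [gaussianPDFReal_eq_mul_exp θ v A x, mul_right_comm]
  gcongr
  · exact mul_nonneg (gaussianPDFReal_nonneg θ v A) (exp_nonneg _)
  · nlinarith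

lemma setIntegral_Ioc_gaussianPDFReal_le (hr : 0 < (A - θ) / v) (hw : A ≤ w) :
    ∫ x in Ioc A w, gaussianPDFReal θ v x ≤
      gaussianPDFReal θ v A * ((1 - exp (-((A - θ) / v * (w - A)))) / ((A - θ) / v)) := by
  rw [← integral_Ioc_exp_neg_mul_sub hr hw, ← integral_const_mul]
  refine setIntegral_mono_on (integrable_gaussianPDFReal θ v).integrableOn
    (((integrableOn_Ioi_exp_neg_mul_sub hr A).mono_set Ioc_subset_Ioi_self).const_mul _)
    measurableSet_Ioc fun x _ => gaussianPDFReal_le_mul_exp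

lemma le_setIntegral_Ioc_gaussianPDFReal (hr : 0 < (A - θ) / v) (hw : A ≤ w) :
    gaussianPDFReal θ v A * exp (-((w - A) ^ 2 / (2 * v))) *
        ((1 - exp (-((A - θ) / v * (w - A)))) / ((A - θ) / v)) ≤
      ∫ x in Ioc A w, gaussianPDFReal θ v x := by
  rw [← integral_Ioc_exp_neg_mul_sub hr hw, ← integral_const_mul]
  refine setIntegral_mono_on
    (((integrableOn_Ioi_exp_neg_mul_sub hr A).mono_set Ioc_subset_Ioi_self).const_mul _)
    (integrable_gaussianPDFReal θ v).integrableOn measurableSet_Ioc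
    fun x hx => mul_exp_le_gaussianPDFReal hx.1.le (by linarith [hx.2])

lemma setIntegral_Ioi_gaussianPDFReal_le (hr : 0 < (A - θ) / v) :
    ∫ x in Ioi A, gaussianPDFReal θ v x ≤ gaussianPDFReal θ v A * ((A - θ) / v)⁻¹ := by
  rw [← integral_Ioi_exp_neg_mul_sub hr A, ← integral_const_mul]
  exact setIntegral_mono_on (integrable_gaussianPDFReal θ v).integrableOn
    ((integrableOn_Ioi_exp_neg_mul_sub hr A).const_mul _)
    measurableSet_Ioi fun x _ => gaussianPDFReal_le_mul_exp

lemma setIntegral_Ioc_gaussianPDFReal_pos (hv : v ≠ 0) {a b : ℝ} (hab : a < b) :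
    0 < ∫ x in Ioc a b, gaussianPDFReal θ v x := by
  rw [setIntegral_pos_iff_support_of_nonneg_ae (ae_of_all _ (gaussianPDFReal_nonneg θ v))
    (integrable_gaussianPDFReal θ v).integrableOn]
  have : Function.support (gaussianPDFReal θ v) = univ :=
    Function.support_eq_univ fun x => (gaussianPDFReal_pos θ v x hv).ne'
  simp [this, hab]

lemma setIntegral_gaussianPDFReal_mono {s t : Set ℝ} (hst : s ⊆ t) :
    ∫ x in s, gaussianPDFReal θ v x ≤ ∫ x in t, gaussianPDFReal θ v x :=
  setIntegral_mono_set (integrable_gaussianPDFReal θ v).integrableOn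
    (ae_of_all _ (gaussianPDFReal_nonneg θ v)) hst.eventuallyLE

end Tilting

section QuantileEquation

variable {v : ℝ≥0} {T : Set ℝ} {γ θ A w : ℝ}

lemma exp_mul_one_sub_exp_le_of_integral_eq (hv : v ≠ 0) (hTA : T ⊆ Ioi A) (hγ : 0 ≤ γ)
    (hr : 0 < (A - θ) / v) (hw : A ≤ w)
    (h : ∫ x in Ioc A w, gaussianPDFReal θ v x = γ * ∫ x in T, gaussianPDFReal θ v x) :
    exp (-((w - A) ^ 2 / (2 * v))) * (1 - exp (-((A - θ) / v * (w - A)))) ≤ γ := by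
  set r := (A - θ) / v
  have hP := gaussianPDFReal_pos θ v A hv
  have hmass : exp (-((w - A) ^ 2 / (2 * v))) * (1 - exp (-(r * (w - A)))) *
      (gaussianPDFReal θ v A * r⁻¹) ≤ γ * (gaussianPDFReal θ v A * r⁻¹) :=
    calc _ = gaussianPDFReal θ v A * exp (-((w - A) ^ 2 / (2 * v))) *
          ((1 - exp (-(r * (w - A)))) / r) := by ring
      _ ≤ γ * ∫ x in T, gaussianPDFReal θ v x :=
          h ▸ le_setIntegral_Ioc_gaussianPDFReal hr hw
      _ ≤ γ * ∫ x in Ioi A, gaussianPDFReal θ v x :=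
          mul_le_mul_of_nonneg_left (setIntegral_gaussianPDFReal_mono hTA) hγ
      _ ≤ γ * (gaussianPDFReal θ v A * r⁻¹) :=
          mul_le_mul_of_nonneg_left (setIntegral_Ioi_gaussianPDFReal_le hr) hγ
  exact le_of_mul_le_mul_right hmass (by positivity)

lemma mul_exp_mul_one_sub_exp_le_of_integral_eq (hv : v ≠ 0) {m : ℝ} (hm : 0 ≤ m)
    (hmT : Ioc A (A + m) ⊆ T) (hγ : 0 ≤ γ) (hr : 0 < (A - θ) / v) (hw : A ≤ w)
    (h : ∫ x in Ioc A w, gaussianPDFReal θ v x = γ * ∫ x in T, gaussianPDFReal θ v x) :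
    γ * exp (-(m ^ 2 / (2 * v))) * (1 - exp (-((A - θ) / v * m))) ≤
      1 - exp (-((A - θ) / v * (w - A))) := by
  set r := (A - θ) / v
  have hP := gaussianPDFReal_pos θ v A hv
  have hIoc_m := le_setIntegral_Ioc_gaussianPDFReal (w := A + m) hr (by linarith)
  simp only [add_sub_cancel_left] at hIoc_m
  have hmass : γ * exp (-(m ^ 2 / (2 * v))) * (1 - exp (-(r * m))) *
      (gaussianPDFReal θ v A * r⁻¹) ≤
        (1 - exp (-(r * (w - A)))) * (gaussianPDFReal θ v A * r⁻¹) :=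
    calc _ = γ * (gaussianPDFReal θ v A * exp (-(m ^ 2 / (2 * v))) *
          ((1 - exp (-(r * m))) / r)) := by ring
      _ ≤ γ * ∫ x in Ioc A (A + m), gaussianPDFReal θ v x := mul_le_mul_of_nonneg_left hIoc_m hγ
      _ ≤ γ * ∫ x in T, gaussianPDFReal θ v x :=
          mul_le_mul_of_nonneg_left (setIntegral_gaussianPDFReal_mono hmT) hγ
      _ ≤ gaussianPDFReal θ v A * ((1 - exp (-(r * (w - A)))) / r) :=
          h ▸ setIntegral_Ioc_gaussianPDFReal_le hr hw
      _ = _ := by ring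
  exact le_of_mul_le_mul_right hmass (by positivity)

lemma mul_sub_le_of_integral_eq (hv : v ≠ 0) {B X : ℝ} (hBT : Ioc A B ⊆ T) (hAw : A < w)
    (hwB : w ≤ B) (hX : 0 ≤ X) (hrX : (A - θ) / v ≤ X)
    (h : ∫ x in Ioc A w, gaussianPDFReal θ v x = γ * ∫ x in T, gaussianPDFReal θ v x) :
    γ * (B - w) ≤ exp ((B - A) ^ 2 / (2 * v) + X * (B - A)) * (w - A) := by
  set r := (A - θ) / v
  set C := exp ((B - A) ^ 2 / (2 * v) + X * (B - A))
  have hpoint : ∀ x ∈ Ioc A w, ∀ y ∈ Ioc w B,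
      gaussianPDFReal θ v x ≤ C * gaussianPDFReal θ v y := fun x hx y hy => by
    have hexp : exp (-(r * (x - A))) ≤ exp (X * (B - A)) * exp (-(r * (y - A))) := by
      rw [← exp_add, exp_le_exp]
      nlinarith [hx.1, hx.2, hy.1, hy.2]
    calc gaussianPDFReal θ v x ≤ gaussianPDFReal θ v A * exp (-(r * (x - A))) :=
          gaussianPDFReal_le_mul_exp
      _ ≤ gaussianPDFReal θ v A * (exp (X * (B - A)) * exp (-(r * (y - A)))) :=
          mul_le_mul_of_nonneg_left hexp (gaussianPDFReal_nonneg θ v A)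
      _ = C * (gaussianPDFReal θ v A * exp (-((B - A) ^ 2 / (2 * v))) * exp (-(r * (y - A)))) := by
          simp only [C, exp_add, exp_neg]
          field_simp
      _ ≤ C * gaussianPDFReal θ v y :=
          mul_le_mul_of_nonneg_left
            (mul_exp_le_gaussianPDFReal (by linarith [hy.1]) (by linarith [hy.2])) (exp_nonneg _)
  have hD : 0 < ∫ x in T, gaussianPDFReal θ v x :=
    (setIntegral_Ioc_gaussianPDFReal_pos hv (hAw.trans_le hwB)).trans_le
      (setIntegral_gaussianPDFReal_mono hBT)
  have hmass : γ * (B - w) * ∫ x in T, gaussianPDFReal θ v x ≤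
      C * (w - A) * ∫ x in T, gaussianPDFReal θ v x :=
    calc _ = (B - w) * ∫ x in Ioc A w, gaussianPDFReal θ v x := by rw [h]; ring
      _ ≤ C * (w - A) * ∫ y in Ioc w B, gaussianPDFReal θ v y :=
          mul_setIntegral_Ioc_le_of_le_mul hAw.le hwB
            (integrable_gaussianPDFReal θ v).integrableOn hpoint
      _ ≤ C * (w - A) * ∫ x in T, gaussianPDFReal θ v x :=
          mul_le_mul_of_nonneg_left
            (setIntegral_gaussianPDFReal_mono ((Ioc_subset_Ioc_left hAw.le).trans hBT))
            (mul_nonneg (exp_nonneg _) (by linarith))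
  exact le_of_mul_le_mul_right hmass hD

end QuantileEquation

section Asymptotics

variable {v : ℝ≥0} {T : Set ℝ} {γ A B : ℝ} {θ : ℝ → ℝ}

lemma tendsto_sub_div_atTop_of_integral_eq (hv : v ≠ 0) (hAB : A < B) (hTA : T ⊆ Ioi A)
    (hBT : Ioc A B ⊆ T) (hγ : 0 < γ)
    (hθ : ∀ᶠ w in 𝓝[T] A, ∫ x in Ioc A w, gaussianPDFReal (θ w) v x =
      γ * ∫ x in T, gaussianPDFReal (θ w) v x) :
    Tendsto (fun w => (A - θ w) / v) (𝓝[T] A) atTop := by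
  refine tendsto_atTop.2 fun X => ?_
  set C := exp ((B - A) ^ 2 / (2 * v) + max X 0 * (B - A))
  have hgap : Tendsto (fun w => γ * (B - w) - C * (w - A)) (𝓝[T] A) (𝓝 (γ * (B - A))) := by
    have : Continuous fun w => γ * (B - w) - C * (w - A) := by fun_prop
    simpa using (this.tendsto A).mono_left nhdsWithin_le_nhds
  filter_upwards [hθ, self_mem_nhdsWithin, nhdsWithin_le_nhds (eventually_lt_nhds hAB),
    hgap.eventually (eventually_gt_nhds (mul_pos hγ (sub_pos.2 hAB)))] with w hw hwT hwB hpos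
  by_contra! hlt
  have := mul_sub_le_of_integral_eq hv hBT (hTA hwT) hwB.le (le_max_right X 0)
    (hlt.le.trans (le_max_left X 0)) hw
  linarith

lemma tendsto_exp_neg_sub_div_mul_of_integral_eq (hv : v ≠ 0) (hAB : A < B) (hTA : T ⊆ Ioi A)
    (hBT : Ioc A B ⊆ T) (hγ : 0 < γ)
    (hθ : ∀ᶠ w in 𝓝[T] A, ∫ x in Ioc A w, gaussianPDFReal (θ w) v x =
      γ * ∫ x in T, gaussianPDFReal (θ w) v x) :
    Tendsto (fun w => exp (-((A - θ w) / v * (w - A)))) (𝓝[T] A) (𝓝 (1 - γ)) := by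
  have hr := tendsto_sub_div_atTop_of_integral_eq hv hAB hTA hBT hγ hθ
  have hAw : ∀ᶠ w in 𝓝[T] A, A < w := eventually_mem_nhdsWithin.mono hTA
  have hlower :
      Tendsto (fun w => 1 - γ * exp ((w - A) ^ 2 / (2 * v))) (𝓝[T] A) (𝓝 (1 - γ)) := by
    have : Continuous fun w => 1 - γ * exp ((w - A) ^ 2 / (2 * v)) := by fun_prop
    simpa using (this.tendsto A).mono_left nhdsWithin_le_nhds
  have hupper : Tendsto (fun ρ => 1 - γ * exp (-(ρ⁻¹ / (2 * v))) * (1 - exp (-√ρ))) atTop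
      (𝓝 (1 - γ)) := by
    have h₁ : Tendsto (fun ρ : ℝ => exp (-(ρ⁻¹ / (2 * v)))) atTop (𝓝 1) := by
      simpa using ((tendsto_inv_atTop_zero.div_const (2 * (v : ℝ))).neg).rexp
    have h₂ : Tendsto (fun ρ : ℝ => exp (-√ρ)) atTop (𝓝 0) :=
      tendsto_exp_neg_atTop_nhds_zero.comp tendsto_sqrt_atTop
    simpa using (tendsto_const_nhds (x := (1 : ℝ))).sub
      ((h₁.const_mul γ).mul ((tendsto_const_nhds (x := (1 : ℝ))).sub h₂))
  refine tendsto_of_tendsto_of_tendsto_of_le_of_le' hlower (hupper.comp hr) ?_ ?_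
  · filter_upwards [hθ, hAw, hr.eventually_gt_atTop 0] with w hw hAw hr0
    have := mul_le_mul_of_nonneg_left
      (exp_mul_one_sub_exp_le_of_integral_eq hv hTA hγ.le hr0 hAw.le hw)
      (exp_nonneg ((w - A) ^ 2 / (2 * v)))
    rw [← mul_assoc, ← exp_add, add_neg_cancel, exp_zero, one_mul] at this
    linarith
  · -- `m = ρ^{-1/2}` makes both `e^{-m² / 2v} → 1` and `e^{-ρ m} = e^{-√ρ} → 0`.
    filter_upwards [hθ, hAw, hr.eventually_gt_atTop ((B - A) ^ 2)⁻¹] with w hw hAw hrB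
    set ρ := (A - θ w) / v
    have hρ : 0 < ρ := lt_trans (by have := sub_pos.2 hAB; positivity) hrB
    have hm : (√ρ)⁻¹ ≤ B - A := by
      rw [inv_le_comm₀ (sqrt_pos.2 hρ) (sub_pos.2 hAB), le_sqrt' (inv_pos.2 (sub_pos.2 hAB)),
        inv_pow]
      exact hrB.le
    have := mul_exp_mul_one_sub_exp_le_of_integral_eq hv (inv_nonneg.2 (sqrt_nonneg ρ))
      ((Ioc_subset_Ioc_right (by linarith)).trans hBT) hγ.le hρ hAw.le hw
    rw [inv_pow, sq_sqrt hρ.le, ← div_eq_mul_inv, div_sqrt] at this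
    show _ ≤ 1 - γ * exp (-(ρ⁻¹ / (2 * v))) * (1 - exp (-√ρ))
    linarith

theorem tendsto_sub_mul_of_integral_eq (hv : v ≠ 0) (hAB : A < B) (hTA : T ⊆ Ioi A)
    (hBT : Ioc A B ⊆ T) (hγ : γ ∈ Ioo 0 1)
    (hθ : ∀ᶠ w in 𝓝[T] A, ∫ x in Ioc A w, gaussianPDFReal (θ w) v x =
      γ * ∫ x in T, gaussianPDFReal (θ w) v x) :
    Tendsto (fun w => (A - w) * θ w) (𝓝[T] A) (𝓝 (-(v * log (1 - γ)))) := by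
  have hrate : Tendsto (fun w => (A - θ w) / v * (w - A)) (𝓝[T] A) (𝓝 (-log (1 - γ))) := by
    simpa using ((tendsto_exp_neg_sub_div_mul_of_integral_eq hv hAB hTA hBT hγ.1 hθ).log
      (sub_pos.2 hγ.2).ne').neg
  have hw : Tendsto (fun w => w - A) (𝓝[T] A) (𝓝 0) := by
    simpa using ((continuous_sub_right A).tendsto A).mono_left nhdsWithin_le_nhds
  have hv' : (v : ℝ) ≠ 0 := by exact_mod_cast hv
  convert (hrate.const_mul (v : ℝ)).sub (hw.mul_const A) using 1
  · ext w
    field_simp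
    ring
  · rw [zero_mul, sub_zero, mul_neg]

end Asymptotics

lemma truncNormalCDF_eq_div (ς : ℝ) (hς : ς ≠ 0) (T : Set ℝ) (θ w : ℝ) :
    truncNormalCDF ς T θ w = (∫ x in Iic w ∩ T, gaussianPDFReal θ (ς ^ 2).toNNReal x) /
      ∫ x in T, gaussianPDFReal θ (ς ^ 2).toNNReal x := by
  have hv : (ς ^ 2).toNNReal ≠ 0 := by simpa using hς
  simp only [truncNormalCDF, gaussianReal_apply_eq_integral θ hv, ENNReal.toReal_ofReal
    (integral_nonneg fun x => gaussianPDFReal_nonneg θ _ x)]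

lemma integral_Ioc_eq_mul_of_truncNormalCDF_eq {ς : ℝ} (hς : ς ≠ 0) {T : Set ℝ}
    {A B θ w γ : ℝ} (hTA : T ⊆ Ioi A) (hBT : Ioc A B ⊆ T) (hwT : w ∈ T) (hwB : w ≤ B)
    (h : truncNormalCDF ς T θ w = γ) :
    ∫ x in Ioc A w, gaussianPDFReal θ (ς ^ 2).toNNReal x =
      γ * ∫ x in T, gaussianPDFReal θ (ς ^ 2).toNNReal x := by
  have hwT' : Ioc A w ⊆ T := (Ioc_subset_Ioc_right hwB).trans hBT
  have hIic : Iic w ∩ T = Ioc A w :=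
    Subset.antisymm (fun x hx => ⟨hTA hx.2, hx.1⟩) fun x hx => ⟨hx.2, hwT' hx⟩
  have hD : 0 < ∫ x in T, gaussianPDFReal θ (ς ^ 2).toNNReal x :=
    (setIntegral_Ioc_gaussianPDFReal_pos (by simpa using hς) (hTA hwT)).trans_le
      (setIntegral_gaussianPDFReal_mono hwT')
  rwa [truncNormalCDF_eq_div ς hς, hIic, div_eq_iff hD.ne'] at h

lemma apply_zero_le_of_interlaced {α : Type*} [Preorder α] {K : ℕ} {a b : ℕ → α}
    (hab : ∀ i < K, a i < b i) (hba : ∀ i, i + 1 < K → b i < a (i + 1)) :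
    ∀ i < K, a 0 ≤ a i
  | 0, _ => le_rfl
  | i + 1, hi => (apply_zero_le_of_interlaced hab hba i (by omega)).trans
      ((hab i (by omega)).trans (hba i hi)).le

lemma EReal.toReal_lt_of_lt_coe {x : EReal} {y : ℝ} (hx : x ≠ ⊥) (h : x < y) :
    x.toReal < y := by
  rw [← EReal.coe_toReal h.ne_top hx] at h
  exact EReal.coe_lt_coe_iff.1 h

lemma iUnion_Ioo_subset_Ioi {K : ℕ} {a b : ℕ → EReal} (hab : ∀ i < K, a i < b i)
    (hba : ∀ i, i + 1 < K → b i < a (i + 1)) (ha0 : a 0 ≠ ⊥) :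
    ⋃ i ∈ Finset.range K, {x : ℝ | a i < (x : EReal) ∧ (x : EReal) < b i} ⊆
      Ioi (a 0).toReal := by
  intro x hx
  simp only [Finset.mem_range, mem_iUnion, mem_ofPred_eq] at hx
  obtain ⟨i, hi, hax, -⟩ := hx
  exact EReal.toReal_lt_of_lt_coe ha0 ((apply_zero_le_of_interlaced hab hba i hi).trans_lt hax)

lemma exists_Ioc_subset_iUnion_Ioo {K : ℕ} (hK : 1 ≤ K) {a b : ℕ → EReal}
    (ha0 : a 0 ≠ ⊥) (hab0 : a 0 < b 0) : ∃ B, (a 0).toReal < B ∧ Ioc (a 0).toReal B ⊆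
      ⋃ i ∈ Finset.range K, {x : ℝ | a i < (x : EReal) ∧ (x : EReal) < b i} := by
  obtain ⟨B, haB, hBb⟩ := EReal.lt_iff_exists_real_btwn.1 hab0
  refine ⟨B, EReal.toReal_lt_of_lt_coe ha0 haB, fun x hx => ?_⟩
  simp only [Finset.mem_range, mem_iUnion, mem_ofPred_eq]
  refine ⟨0, hK, ?_, (EReal.coe_le_coe_iff.2 hx.2).trans_lt hBb⟩
  rw [← EReal.coe_toReal haB.ne_top ha0]
  exact EReal.coe_lt_coe_iff.2 hx.1

/-- If `a_1 > −∞`, then for each `γ ∈ (0,1)`,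
`(a_1 − w)·Q_γ(w) → −ς²·log(1 − γ)` as `w` decreases to `a_1` along `T`. -/
theorem stmt_7
    (ς : ℝ) (hς : 0 < ς) (K : ℕ) (hK : 1 ≤ K) (a b : ℕ → EReal)
    (hab : ∀ i < K, a i < b i) (hba : ∀ i, i + 1 < K → b i < a (i + 1))
    (T : Set ℝ)
    (hT : T = ⋃ i ∈ Finset.range K, {x : ℝ | a i < (x : EReal) ∧ (x : EReal) < b i})
    (ha1 : a 0 ≠ ⊥)
    (γ : ℝ) (hγ : γ ∈ Set.Ioo (0 : ℝ) 1) (Q : ℝ → ℝ)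
    (hQ : ∀ w ∈ T, truncNormalCDF ς T (Q w) w = γ) :
    Tendsto (fun w : ℝ => ((a 0).toReal - w) * Q w)
      (nhdsWithin ((a 0).toReal) T) (nhds (-(ς ^ 2 * Real.log (1 - γ)))) := by
  have hTA : T ⊆ Ioi (a 0).toReal := hT ▸ iUnion_Ioo_subset_Ioi hab hba ha1
  obtain ⟨B, hAB, hBT⟩ := exists_Ioc_subset_iUnion_Ioo hK ha1 (hab 0 hK)
  rw [← hT] at hBT
  have hQ' : ∀ᶠ w in 𝓝[T] (a 0).toReal,
      ∫ x in Ioc (a 0).toReal w, gaussianPDFReal (Q w) (ς ^ 2).toNNReal x =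
        γ * ∫ x in T, gaussianPDFReal (Q w) (ς ^ 2).toNNReal x := by
    filter_upwards [self_mem_nhdsWithin, nhdsWithin_le_nhds (eventually_lt_nhds hAB)]
      with w hwT hwB
    exact integral_Ioc_eq_mul_of_truncNormalCDF_eq hς.ne' hTA hBT hwT hwB.le (hQ w hwT)
  simpa [Real.coe_toNNReal _ (sq_nonneg ς)] using
    tendsto_sub_mul_of_integral_eq (by simpa using hς.ne') hAB hTA hBT hγ hQ'
end
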